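/- arXiv:cs/0209019 — 4 statements merged into one kernel-verified Lean document; each statement's English description precedes it below -/
import Mathlib

section
/- Let EF be an evolution frame with a finite event class EC, and let S be a successor-closed set of knowledge states. Then strong equivalence ≡_EF has finite index with respect to S if and only if weak equivalence ≡⁰_EF has finite index with respect to S and there exists some k ≥ 0 such that k-equivalence of any two states in S implies their strong equivalence. -/
structure KState (Rule Event : Type) : Type where
  kb : Set Rule
  events : List Event

def KState.append {Rule Event : Type} (s : KState Rule Event) (es : List Event) :
    KState Rule Event := ⟨s.kb, s.events ++ es⟩

def InEC {Event : Type} (EC : Set Event) (es : List Event) : Prop := ∀ E ∈ es, E ∈ EC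

def StrongEquiv {Rule Event : Type} (B : KState Rule Event → Set Rule) (EC : Set Event)
    (s s' : KState Rule Event) : Prop :=
  ∀ es : List Event, InEC EC es → B (s.append es) = B (s'.append es)

def KEquiv {Rule Event : Type} (B : KState Rule Event → Set Rule) (EC : Set Event) (k : ℕ)
    (s s' : KState Rule Event) : Prop :=
  ∀ es : List Event, InEC EC es → es.length ≤ k → B (s.append es) = B (s'.append es)

def cls {α : Type} (R : α → α → Prop) (S : Set α) (s : α) : Set α := {t ∈ S | R s t}

def FiniteIndex {α : Type} (R : α → α → Prop) (S : Set α) : Prop :=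
  (cls R S '' S).Finite

def SuccClosed {Rule Event : Type} (EC : Set Event) (S : Set (KState Rule Event)) : Prop :=
  ∀ s ∈ S, ∀ E ∈ EC, s.append [E] ∈ S

section Aux

variable {Rule Event : Type} {B : KState Rule Event → Set Rule} {EC : Set Event}

lemma kequiv_refl (k : ℕ) (s : KState Rule Event) : KEquiv B EC k s s := fun _ _ _ => rfl

lemma kequiv_symm {k s t} (h : KEquiv B EC k s t) : KEquiv B EC k t s :=
  fun es he hl => (h es he hl).symm

lemma kequiv_trans {k s t u} (h1 : KEquiv B EC k s t) (h2 : KEquiv B EC k t u) :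
    KEquiv B EC k s u := fun es he hl => (h1 es he hl).trans (h2 es he hl)

lemma kequiv_mono {j k : ℕ} (hjk : j ≤ k) {s t} (h : KEquiv B EC k s t) : KEquiv B EC j s t :=
  fun es he hl => h es he (hl.trans hjk)

lemma strong_refl (s : KState Rule Event) : StrongEquiv B EC s s := fun _ _ => rfl

lemma strong_symm {s t} (h : StrongEquiv B EC s t) : StrongEquiv B EC t s :=
  fun es he => (h es he).symm

lemma strong_trans {s t u} (h1 : StrongEquiv B EC s t) (h2 : StrongEquiv B EC t u) :
    StrongEquiv B EC s u := fun es he => (h1 es he).trans (h2 es he)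

lemma strong_to_k {s t} (h : StrongEquiv B EC s t) (k : ℕ) : KEquiv B EC k s t :=
  fun es he _ => h es he

lemma k_all_to_strong {s t} (h : ∀ k, KEquiv B EC k s t) : StrongEquiv B EC s t :=
  fun es he => h es.length es he le_rfl

lemma cls_eq_of {α : Type} {R : α → α → Prop}
    (hsymm : ∀ a b, R a b → R b a) (htrans : ∀ a b c, R a b → R b c → R a c)
    (S : Set α) {s t : α} (h : R s t) : cls R S s = cls R S t := by
  ext u
  simp only [cls, Set.mem_setOf_eq]
  exact ⟨fun ⟨hu, hr⟩ => ⟨hu, htrans _ _ _ (hsymm _ _ h) hr⟩,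
    fun ⟨hu, hr⟩ => ⟨hu, htrans _ _ _ h hr⟩⟩

lemma rel_of_cls_eq {α : Type} {R : α → α → Prop} {S : Set α} {s t : α}
    (hrefl : R t t) (ht : t ∈ S) (h : cls R S s = cls R S t) : R s t := by
  have : t ∈ cls R S t := ⟨ht, hrefl⟩
  rw [← h] at this
  exact this.2

lemma finite_image_of_factor {α β γ : Type*} [Nonempty β] {S : Set α}
    (f : α → β) (g : α → γ) (hg : (g '' S).Finite)
    (hfg : ∀ s ∈ S, ∀ t ∈ S, g s = g t → f s = f t) : (f '' S).Finite := by
  classical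
  have hsub : f '' S ⊆ (fun c => if hc : ∃ s, s ∈ S ∧ g s = c then f hc.choose
      else Classical.arbitrary β) '' (g '' S) := by
    rintro _ ⟨s, hs, rfl⟩
    refine ⟨g s, ⟨s, hs, rfl⟩, ?_⟩
    have hc : ∃ t, t ∈ S ∧ g t = g s := ⟨s, hs, rfl⟩
    simp only [dif_pos hc]
    exact hfg _ hc.choose_spec.1 _ hs hc.choose_spec.2
  exact ((hg.image _)).subset hsub

lemma kstate_append_nil (s : KState Rule Event) : s.append [] = s := by
  simp [KState.append]

lemma kstate_append_cons (s : KState Rule Event) (E : Event) (es : List Event) :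
    s.append (E :: es) = (s.append [E]).append es := by
  simp [KState.append]

lemma mem_of_append {S : Set (KState Rule Event)} (hS : SuccClosed EC S) :
    ∀ (es : List Event) (s : KState Rule Event), s ∈ S → InEC EC es → s.append es ∈ S := by
  intro es
  induction es with
  | nil => intro s hs _; rw [kstate_append_nil]; exact hs
  | cons E rest ih =>
      intro s hs he
      rw [kstate_append_cons]
      exact ih _ (hS s hs E (he E (by simp))) (fun x hx => he x (by simp [hx]))

lemma finiteIndex_kequiv {S : Set (KState Rule Event)} (hEC : EC.Finite) (hS : SuccClosed EC S)
    (h0 : FiniteIndex (KEquiv B EC 0) S) : ∀ k, FiniteIndex (KEquiv B EC k) S := by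
  intro k
  induction k with
  | zero => exact h0
  | succ k ih =>
      haveI : Finite ↥EC := hEC.to_subtype
      refine finite_image_of_factor (cls (KEquiv B EC (k + 1)) S)
        (fun s => (cls (KEquiv B EC 0) S s,
          fun E : ↥EC => cls (KEquiv B EC k) S (s.append [E.1]))) ?_ ?_
      · apply Set.Finite.subset ((h0.prod (Set.Finite.pi (fun _ : ↥EC => ih))))
        rintro _ ⟨s, hs, rfl⟩
        refine ⟨⟨s, hs, rfl⟩, ?_⟩
        intro E _
        exact ⟨s.append [E.1], mem_of_append hS [E.1] s hs (by
          intro x hx; simp at hx; subst hx; exact E.2), rfl⟩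
      · intro s hs t ht hg
        have h1 : KEquiv B EC 0 s t := by
          have := congrArg Prod.fst hg
          exact rel_of_cls_eq (kequiv_refl 0 t) ht this
        have h2 : ∀ E ∈ EC, KEquiv B EC k (s.append [E]) (t.append [E]) := by
          intro E hE
          have := congrFun (congrArg Prod.snd hg) ⟨E, hE⟩
          exact rel_of_cls_eq (kequiv_refl k _)
            (mem_of_append hS [E] t ht (by intro x hx; simp at hx; subst hx; exact hE)) this
        have hkk : KEquiv B EC (k + 1) s t := by
          intro es he hl
          cases es with
          | nil => exact h1 [] he (by simp)
          | cons E rest =>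
              rw [show s.append (E :: rest) = (s.append [E]).append rest from
                    kstate_append_cons s E rest,
                  show t.append (E :: rest) = (t.append [E]).append rest from
                    kstate_append_cons t E rest]
              exact h2 E (he E (by simp)) rest (fun x hx => he x (by simp [hx]))
                (by simpa using hl)
        exact cls_eq_of (R := KEquiv B EC (k + 1)) (fun _ _ h => kequiv_symm h) (fun _ _ _ h h' => kequiv_trans h h') S hkk

end Aux

/-- For a finite event class and a successor-closed set `S` of knowledge
    states, strong equivalence has finite index with respect to `S` iff weak
    (0-)equivalence has finite index with respect to `S` and some `k`-equivalence
    implies strong equivalence on `S`. -/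
theorem strongEquiv_finiteIndex_iff {Rule Event : Type}
    (B : KState Rule Event → Set Rule) (EC : Set Event)
    (S : Set (KState Rule Event)) (hEC : EC.Finite) (hS : SuccClosed EC S) :
    FiniteIndex (StrongEquiv B EC) S ↔
      (FiniteIndex (KEquiv B EC 0) S ∧
        ∃ k : ℕ, ∀ s ∈ S, ∀ s' ∈ S, KEquiv B EC k s s' → StrongEquiv B EC s s') := by
  classical
  haveI : Nonempty (KState Rule Event) := ⟨⟨∅, []⟩⟩
  constructor
  · intro hfin
    constructor
    · exact finite_image_of_factor (cls (KEquiv B EC 0) S) (cls (StrongEquiv B EC) S) hfin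
        (fun s hs t ht hg => cls_eq_of (R := KEquiv B EC 0)
          (fun _ _ h => kequiv_symm h) (fun _ _ _ h h' => kequiv_trans h h') S
          (strong_to_k (rel_of_cls_eq (strong_refl t) ht hg) 0))
    · set rep : Set (KState Rule Event) → KState Rule Event :=
        fun C => if hC : ∃ u, u ∈ S ∧ cls (StrongEquiv B EC) S u = C then hC.choose
                 else Classical.arbitrary _ with hrepdef
      set kval : KState Rule Event → KState Rule Event → ℕ := fun u v =>
        if h : ∃ es, InEC EC es ∧ B (u.append es) ≠ B (v.append es) then h.choose.length
        else 0 with hkvaldef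
      set F := hfin.toFinset with hF
      refine ⟨F.sup (fun C => F.sup (fun D => kval (rep C) (rep D))), ?_⟩
      set k := F.sup (fun C => F.sup (fun D => kval (rep C) (rep D))) with hk
      intro s hs t ht hke
      have hrep : ∀ u, u ∈ S → rep (cls (StrongEquiv B EC) S u) ∈ S ∧
          StrongEquiv B EC (rep (cls (StrongEquiv B EC) S u)) u := by
        intro u hu
        have hC : ∃ v, v ∈ S ∧ cls (StrongEquiv B EC) S v = cls (StrongEquiv B EC) S u :=
          ⟨u, hu, rfl⟩
        rw [hrepdef]
        simp only [dif_pos hC]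
        exact ⟨hC.choose_spec.1, rel_of_cls_eq (strong_refl u) hu hC.choose_spec.2⟩
      have key : ∀ u v, ¬ StrongEquiv B EC u v → ¬ KEquiv B EC (kval u v) u v := by
        intro u v hn hkv
        have h : ∃ es, InEC EC es ∧ B (u.append es) ≠ B (v.append es) := by
          by_contra h'
          push_neg at h'
          exact hn (fun es he => h' es he)
        rw [hkvaldef] at hkv
        simp only [dif_pos h] at hkv
        exact h.choose_spec.2 (hkv h.choose h.choose_spec.1 le_rfl)
      obtain ⟨hrsS, hrs⟩ := hrep s hs
      obtain ⟨hrtS, hrt⟩ := hrep t ht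
      have hCs : cls (StrongEquiv B EC) S s ∈ F := hfin.mem_toFinset.mpr ⟨s, hs, rfl⟩
      have hCt : cls (StrongEquiv B EC) S t ∈ F := hfin.mem_toFinset.mpr ⟨t, ht, rfl⟩
      have hkk : KEquiv B EC k (rep (cls (StrongEquiv B EC) S s))
          (rep (cls (StrongEquiv B EC) S t)) :=
        kequiv_trans (strong_to_k hrs k)
          (kequiv_trans hke (strong_to_k (strong_symm hrt) k))
      have hle : kval (rep (cls (StrongEquiv B EC) S s)) (rep (cls (StrongEquiv B EC) S t))
          ≤ k := by
        rw [hk]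
        exact le_trans (Finset.le_sup (f := fun D =>
            kval (rep (cls (StrongEquiv B EC) S s)) (rep D)) hCt)
          (Finset.le_sup (f := fun C => F.sup (fun D => kval (rep C) (rep D))) hCs)
      have hst : StrongEquiv B EC (rep (cls (StrongEquiv B EC) S s))
          (rep (cls (StrongEquiv B EC) S t)) := by
        by_contra hn
        exact key _ _ hn (kequiv_mono hle hkk)
      exact strong_trans (strong_symm hrs) (strong_trans hst hrt)
  · rintro ⟨h0, k, hk⟩
    have hfk := finiteIndex_kequiv hEC hS h0 k
    exact finite_image_of_factor (cls (StrongEquiv B EC) S) (cls (KEquiv B EC k) S) hfk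
      (fun s hs t ht hg => cls_eq_of (R := StrongEquiv B EC)
        (fun _ _ h => strong_symm h) (fun _ _ _ h h' => strong_trans h h') S
        (hk s hs t ht (rel_of_cls_eq (kequiv_refl k t) ht hg)))
end

section
/- For finite propositional extended logic programs P_1 and P_2 over a finite alphabet At, if Bel_E(P_1) = Bel_E(P_2) then P_1 and P_2 have the same consistent answer sets: AS(P_1) = AS(P_2). In particular, if S = {L_1,...,L_k} is a consistent answer set of P_1 but not of P_2, then the constraint ← L_1,...,L_k, not L_{k+1},..., not L_m (where L_{k+1},...,L_m are all literals over At missing from S) belongs to Bel_E(P_2) but not to Bel_E(P_1). -/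
/-- Classical literals over the alphabet `At`: atoms and strongly negated atoms. -/
inductive Lit (At : Type) : Type
  | pos : At → Lit At
  | neg : At → Lit At

/-- The complementary literal. -/
def Lit.compl {At : Type} : Lit At → Lit At
  | .pos a => .neg a
  | .neg a => .pos a

/-- A rule of an extended logic program: an optional head literal (none for
    constraints), positive body literals, and weakly negated body literals. -/
structure Rule (At : Type) : Type where
  head : Option (Lit At)
  pbody : Set (Lit At)
  nbody : Set (Lit At)

/-- An extended logic program: a set of rules. -/
abbrev Program (At : Type) := Set (Rule At)

/-- An interpretation is consistent if it contains no pair of opposite literals. -/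
def Consistent {At : Type} (S : Set (Lit At)) : Prop :=
  ∀ a : At, ¬ (Lit.pos a ∈ S ∧ Lit.neg a ∈ S)

/-- The body of `r` is satisfied by `S`. -/
def BodySat {At : Type} (S : Set (Lit At)) (r : Rule At) : Prop :=
  r.pbody ⊆ S ∧ ∀ L ∈ r.nbody, L ∉ S

/-- The rule `r` is satisfied by `S`: the head is in `S`, or some positive body literal
    is absent from `S`, or some weakly negated body literal is in `S`. -/
def RuleSat {At : Type} (S : Set (Lit At)) (r : Rule At) : Prop :=
  (∃ L, r.head = some L ∧ L ∈ S) ∨ ¬ BodySat S r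

/-- `T` is closed under the reduct of `P` with respect to `S`. -/
def ClosedUnder {At : Type} (P : Program At) (S T : Set (Lit At)) : Prop :=
  ∀ r ∈ P, (∀ L ∈ r.nbody, L ∉ S) → r.pbody ⊆ T → ∃ L, r.head = some L ∧ L ∈ T

/-- `S` is a consistent answer set of the extended logic program `P`: it is consistent,
    closed under the reduct `P^S`, and minimal with this property. -/
def IsAnswerSet {At : Type} (P : Program At) (S : Set (Lit At)) : Prop :=
  Consistent S ∧ ClosedUnder P S S ∧ ∀ T, T ⊆ S → ClosedUnder P S T → T = S

/-- The set of consistent answer sets of `P`. -/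
def AS {At : Type} (P : Program At) : Set (Set (Lit At)) := {S | IsAnswerSet P S}

/-- The rejection set `Rej_i(S, Ps)`: rules of `P_i` rejected by unrejected rules with
    complementary heads from later programs whose bodies are jointly satisfied by `S`. -/
def Rej {At : Type} (S : Set (Lit At)) (Ps : List (Program At)) : ℕ → Set (Rule At)
  | i =>
    { r | r ∈ Ps.getD i ∅ ∧ ∃ j, ∃ _h1 : i < j, ∃ _h2 : j < Ps.length,
          ∃ r', r' ∈ Ps.getD j ∅ ∧ r' ∉ Rej S Ps j ∧
          (∃ L, r.head = some L ∧ r'.head = some (Lit.compl L)) ∧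
          BodySat S r ∧ BodySat S r' }
  termination_by i => Ps.length - i
  decreasing_by omega

/-- The full rejection set `Rej(S, Ps)`. -/
def RejAll {At : Type} (S : Set (Lit At)) (Ps : List (Program At)) : Set (Rule At) :=
  {r | ∃ i, i < Ps.length ∧ r ∈ Rej S Ps i}

/-- All rules occurring in the update sequence `Ps`. -/
def allRules {At : Type} (Ps : List (Program At)) : Program At :=
  {r | ∃ P ∈ Ps, r ∈ P}

/-- Update answer sets of the sequence `Ps`: consistent answer sets of the union of all
    programs minus the rejected rules. -/
def UpdAS {At : Type} (Ps : List (Program At)) : Set (Set (Lit At)) :=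
  {S | IsAnswerSet (allRules Ps \ RejAll S Ps) S}

/-- The belief operator of the update answer set semantics. -/
def BelE {At : Type} (Ps : List (Program At)) : Set (Rule At) :=
  {r | ∀ S ∈ UpdAS Ps, RuleSat S r}

/-- The belief operator for a single extended logic program. -/
def BelAS {At : Type} (P : Program At) : Set (Rule At) :=
  {r | ∀ S ∈ AS P, RuleSat S r}

/-- For finite propositional ELPs over a finite alphabet, equal belief
    sets imply equal sets of consistent answer sets; in particular, if `S` is a
    consistent answer set of `P1` but not of `P2`, then the constraint with positive
    body `S` and weakly negated body all remaining literals belongs to `BelAS P2` but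
    not to `BelAS P1`. -/
theorem belAS_eq_imp_AS_eq {At : Type} [Fintype At] (P1 P2 : Program At)
    (h1 : P1.Finite) (h2 : P2.Finite) :
    (BelAS P1 = BelAS P2 → AS P1 = AS P2) ∧
    (∀ S : Set (Lit At), S ∈ AS P1 → S ∉ AS P2 →
      (⟨none, S, Sᶜ⟩ : Rule At) ∈ BelAS P2 ∧ (⟨none, S, Sᶜ⟩ : Rule At) ∉ BelAS P1) := by
  have key : ∀ (P : Program At) (S : Set (Lit At)),
      (⟨none, S, Sᶜ⟩ : Rule At) ∈ BelAS P ↔ S ∉ AS P := by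
    intro P S
    constructor
    · intro h hS
      rcases h S hS with ⟨L, hL, _⟩ | hB
      · simp at hL
      · exact hB ⟨subset_rfl, fun L hL => hL⟩
    · intro h T hT
      right
      rintro ⟨hsub, hneg⟩
      have hTS : T = S := by
        apply subset_antisymm _ hsub
        intro x hx
        by_contra hc
        exact hneg x hc hx
      exact h (hTS ▸ hT)
  constructor
  · intro heq
    ext S
    constructor
    · intro hS
      by_contra hS2
      have := (key P2 S).mpr hS2
      rw [← heq] at this
      exact ((key P1 S).mp this) hS
    · intro hS
      by_contra hS1
      have := (key P1 S).mpr hS1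
      rw [heq] at this
      exact ((key P2 S).mp this) hS
  · intro S hS1 hS2
    exact ⟨(key P2 S).mpr hS2, fun h => (key P1 S).mp h hS1⟩
end

section
/- The belief operator Bel_E of the update answer set semantics satisfies strong noninterference: for every update sequence P and all extended logic programs P_1, P_2, and Q with Q ⊆ P_2 such that no pair of rules r ∈ Q and r' ∈ (P_2 \ Q) ∪ P_1 has complementary heads (head(r) = ¬head(r')), it holds that Bel_E(P + (P_1, P_2)) = Bel_E(P + (P_1 ∪ Q, P_2 \ Q)). -/
/-!
Rejection in an update sequence only looks forward: whether a rule of `P_i` is rejected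
depends on `P_i` and on the set of rules at levels `> i` that survive at their own level.
So two sequences with a common prefix have the same rejection sets as soon as their
tails have the same rejection sets and the same survivors. For the tails `(P1, P2)` and
`(P1 ∪ Q, P2 \ Q)` both hold: the rules of `Q` can neither reject nor be rejected by a rule
of `(P2 \ Q) ∪ P1`, so moving them one level down changes nothing. The two sequences
then have the same rules and the same rejection sets, hence the same update answer sets.
-/

section Rejection

variable {At : Type}

theorem Lit.compl_compl (L : Lit At) : L.compl.compl = L := by
  cases L <;> rfl

def ComplHeads (r r' : Rule At) : Prop :=
  ∃ L, r.head = some L ∧ r'.head = some L.compl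

theorem ComplHeads.symm {r r' : Rule At} (h : ComplHeads r r') : ComplHeads r' r := by
  obtain ⟨L, hr, hr'⟩ := h
  exact ⟨L.compl, hr', by rw [hr, Lit.compl_compl]⟩

def Conflicting (S : Set (Lit At)) (r r' : Rule At) : Prop :=
  ComplHeads r r' ∧ BodySat S r ∧ BodySat S r'

def unrejectedFrom (S : Set (Lit At)) (Ps : List (Program At)) (i : ℕ) : Set (Rule At) :=
  {r | ∃ j, i ≤ j ∧ j < Ps.length ∧ r ∈ Ps.getD j ∅ ∧ r ∉ Rej S Ps j}

theorem mem_Rej_iff (S : Set (Lit At)) (Ps : List (Program At)) (i : ℕ) (r : Rule At) :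
    r ∈ Rej S Ps i ↔
      r ∈ Ps.getD i ∅ ∧ ∃ r' ∈ unrejectedFrom S Ps (i + 1), Conflicting S r r' := by
  conv_lhs => rw [Rej]
  constructor
  · rintro ⟨hr, j, hij, hj, r', hr', hr'Rej, hheads, hbody, hbody'⟩
    exact ⟨hr, r', ⟨j, hij, hj, hr', hr'Rej⟩, hheads, hbody, hbody'⟩
  · rintro ⟨hr, r', ⟨j, hij, hj, hr', hr'Rej⟩, hheads, hbody, hbody'⟩
    exact ⟨hr, j, hij, hj, r', hr', hr'Rej, hheads, hbody, hbody'⟩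

theorem Rej_eq_empty {S : Set (Lit At)} {Ps : List (Program At)} {i : ℕ}
    (h : Ps.length ≤ i + 1) : Rej S Ps i = ∅ := by
  ext r
  simp only [mem_Rej_iff, Set.mem_empty_iff_false, iff_false]
  rintro ⟨-, r', ⟨j, hij, hj, -⟩, -⟩
  omega

theorem unrejectedFrom_eq_empty {S : Set (Lit At)} {Ps : List (Program At)} {i : ℕ}
    (h : Ps.length ≤ i) : unrejectedFrom S Ps i = ∅ := by
  ext r
  simp only [unrejectedFrom, Set.mem_empty_iff_false, iff_false]
  rintro ⟨j, hij, hj, -⟩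
  omega

theorem unrejectedFrom_eq_diff_union (S : Set (Lit At)) (Ps : List (Program At)) (i : ℕ) :
    unrejectedFrom S Ps i = (Ps.getD i ∅ \ Rej S Ps i) ∪ unrejectedFrom S Ps (i + 1) := by
  ext r
  constructor
  · rintro ⟨j, hij, hj, hr, hrRej⟩
    rcases hij.eq_or_lt with rfl | hij
    · exact Or.inl ⟨hr, hrRej⟩
    · exact Or.inr ⟨j, hij, hj, hr, hrRej⟩
  · rintro (⟨hr, hrRej⟩ | ⟨j, hij, hj, hr, hrRej⟩)
    · have hi : i < Ps.length := by
        by_contra! hi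
        rwa [List.getD_eq_default _ _ hi] at hr
      exact ⟨i, le_rfl, hi, hr, hrRej⟩
    · exact ⟨j, by omega, hj, hr, hrRej⟩

theorem Rej_congr {S : Set (Lit At)} {Ps Ps' : List (Program At)} {i : ℕ}
    (hget : Ps.getD i ∅ = Ps'.getD i ∅)
    (hunrej : unrejectedFrom S Ps (i + 1) = unrejectedFrom S Ps' (i + 1)) :
    Rej S Ps i = Rej S Ps' i := by
  ext r
  rw [mem_Rej_iff, mem_Rej_iff, hget, hunrej]

theorem unrejectedFrom_congr {S : Set (Lit At)} {Ps Ps' : List (Program At)} {i m : ℕ}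
    (him : i ≤ m) (hget : ∀ j, j < m → Ps.getD j ∅ = Ps'.getD j ∅)
    (htop : unrejectedFrom S Ps m = unrejectedFrom S Ps' m) :
    unrejectedFrom S Ps i = unrejectedFrom S Ps' i := by
  induction him using Nat.decreasingInduction with
  | self => exact htop
  | of_succ j hj ih =>
    rw [unrejectedFrom_eq_diff_union, unrejectedFrom_eq_diff_union S Ps', ih,
      Rej_congr (hget j hj) ih, hget j hj]

theorem Rej_append_congr {S : Set (Lit At)} {Ps Ts Ts' : List (Program At)}
    (htail : ∀ k, Rej S (Ps ++ Ts) (Ps.length + k) = Rej S (Ps ++ Ts') (Ps.length + k))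
    (hunrej : unrejectedFrom S (Ps ++ Ts) Ps.length = unrejectedFrom S (Ps ++ Ts') Ps.length)
    (i : ℕ) : Rej S (Ps ++ Ts) i = Rej S (Ps ++ Ts') i := by
  have hget : ∀ j, j < Ps.length → (Ps ++ Ts).getD j ∅ = (Ps ++ Ts').getD j ∅ := fun j hj => by
    rw [List.getD_append _ _ _ _ hj, List.getD_append _ _ _ _ hj]
  rcases lt_or_ge i Ps.length with hi | hi
  · exact Rej_congr (hget i hi) (unrejectedFrom_congr hi hget hunrej)
  · obtain ⟨k, rfl⟩ := Nat.exists_eq_add_of_le hi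
    exact htail k

end Rejection

section TwoProgramTail

variable {At : Type} (S : Set (Lit At)) (Ps : List (Program At)) (X Y : Program At)

def rejectedBy : Set (Rule At) :=
  {r | r ∈ X ∧ ∃ r' ∈ Y, Conflicting S r r'}

theorem getD_append_pair_length : (Ps ++ [X, Y]).getD Ps.length ∅ = X := by
  simp

theorem getD_append_pair_length_succ : (Ps ++ [X, Y]).getD (Ps.length + 1) ∅ = Y := by
  simp

theorem unrejectedFrom_append_pair_length_succ :
    unrejectedFrom S (Ps ++ [X, Y]) (Ps.length + 1) = Y := by
  rw [unrejectedFrom_eq_diff_union, getD_append_pair_length_succ,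
    Rej_eq_empty (by simp), unrejectedFrom_eq_empty (by simp), Set.sdiff_empty,
    Set.union_empty]

theorem Rej_append_pair_length : Rej S (Ps ++ [X, Y]) Ps.length = rejectedBy S X Y := by
  ext r
  rw [mem_Rej_iff, getD_append_pair_length, unrejectedFrom_append_pair_length_succ]
  rfl

theorem unrejectedFrom_append_pair_length :
    unrejectedFrom S (Ps ++ [X, Y]) Ps.length = (X \ rejectedBy S X Y) ∪ Y := by
  rw [unrejectedFrom_eq_diff_union, getD_append_pair_length, Rej_append_pair_length,
    unrejectedFrom_append_pair_length_succ]

theorem Rej_append_pair_length_add_succ (k : ℕ) :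
    Rej S (Ps ++ [X, Y]) (Ps.length + (k + 1)) = ∅ :=
  Rej_eq_empty (by simp)

theorem allRules_append_pair : allRules (Ps ++ [X, Y]) = allRules Ps ∪ (X ∪ Y) := by
  ext r
  simp [allRules, or_and_right, exists_or]

end TwoProgramTail

section MovingRules

variable {At : Type} {P1 P2 Q : Program At}

theorem rejectedBy_move (S : Set (Lit At))
    (hfree : ∀ r ∈ Q, ∀ r' ∈ (P2 \ Q) ∪ P1, ¬ ComplHeads r' r) :
    rejectedBy S (P1 ∪ Q) (P2 \ Q) = rejectedBy S P1 P2 := by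
  ext r
  constructor
  · rintro ⟨hr | hrQ, r', hr', hconf⟩
    · exact ⟨hr, r', hr'.1, hconf⟩
    · exact absurd hconf.1.symm (hfree r hrQ r' (Or.inl hr'))
  · rintro ⟨hr, r', hr', hconf⟩
    have hr'Q : r' ∉ Q := fun hr'Q => hfree r' hr'Q r (Or.inr hr) hconf.1
    exact ⟨Or.inl hr, r', ⟨hr', hr'Q⟩, hconf⟩

theorem union_diff_union_diff {R : Set (Rule At)} (hQ : Q ⊆ P2) (hRQ : Disjoint R Q) :
    ((P1 ∪ Q) \ R) ∪ (P2 \ Q) = (P1 \ R) ∪ P2 := by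
  ext r
  by_cases hrQ : r ∈ Q
  · simp [hrQ, hQ hrQ, Set.disjoint_right.mp hRQ hrQ]
  · simp [hrQ]

theorem disjoint_rejectedBy (S : Set (Lit At))
    (hfree : ∀ r ∈ Q, ∀ r' ∈ (P2 \ Q) ∪ P1, ¬ ComplHeads r' r) :
    Disjoint (rejectedBy S P1 P2) Q := by
  refine Set.disjoint_right.mpr fun r hrQ ⟨hr, r', hr', hconf⟩ => ?_
  by_cases hr'Q : r' ∈ Q
  · exact hfree r' hr'Q r (Or.inr hr) hconf.1
  · exact hfree r hrQ r' (Or.inl ⟨hr', hr'Q⟩) hconf.1.symm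

end MovingRules

theorem UpdAS_congr {At : Type} {Ps Ps' : List (Program At)}
    (hrules : allRules Ps = allRules Ps') (hlen : Ps.length = Ps'.length)
    (hRej : ∀ S i, Rej S Ps i = Rej S Ps' i) : UpdAS Ps = UpdAS Ps' := by
  ext S
  simp only [UpdAS, RejAll, hrules, hlen, hRej]

/-- **strong noninterference of `BelE`.** If `Q ⊆ P2` and no rule of `Q`
    has a head complementary to the head of a rule in `(P2 \ Q) ∪ P1`, then moving the
    rules of `Q` from the last component to the penultimate one preserves the belief
    set. -/
theorem belE_strong_noninterference {At : Type} (Ps : List (Program At))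
    (P1 P2 Q : Program At) (hQ : Q ⊆ P2)
    (hheads : ¬ ∃ (r r' : Rule At) (L : Lit At),
        r ∈ Q ∧ r' ∈ (P2 \ Q) ∪ P1 ∧ r'.head = some L ∧ r.head = some (Lit.compl L)) :
    BelE (Ps ++ [P1, P2]) = BelE (Ps ++ [P1 ∪ Q, P2 \ Q]) := by
  have hfree : ∀ r ∈ Q, ∀ r' ∈ (P2 \ Q) ∪ P1, ¬ ComplHeads r' r :=
    fun r hr r' hr' ⟨L, hL', hL⟩ => hheads ⟨r, r', L, hr, hr', hL', hL⟩
  have hrules : allRules (Ps ++ [P1, P2]) = allRules (Ps ++ [P1 ∪ Q, P2 \ Q]) := by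
    rw [allRules_append_pair, allRules_append_pair, Set.union_assoc P1,
      Set.union_sdiff_cancel hQ]
  have hRej : ∀ S i, Rej S (Ps ++ [P1, P2]) i = Rej S (Ps ++ [P1 ∪ Q, P2 \ Q]) i := by
    intro S
    refine Rej_append_congr (fun k => ?_) ?_
    · rcases k with _ | k
      · rw [Nat.add_zero, Rej_append_pair_length, Rej_append_pair_length,
          rejectedBy_move S hfree]
      · rw [Rej_append_pair_length_add_succ, Rej_append_pair_length_add_succ]
    · rw [unrejectedFrom_append_pair_length, unrejectedFrom_append_pair_length,
        rejectedBy_move S hfree, union_diff_union_diff hQ (disjoint_rejectedBy S hfree)]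
  simp only [BelE, UpdAS_congr hrules (by simp) hRej]
end

section
/- Let Bel be a contracting belief operator on update sequences, i.e., (i) Bel(P + (∅) + P') = Bel(P + P') for all update sequences P, P', and (ii) removing a rule r from a component P_i leaves Bel unchanged whenever r also occurs in some later component P_j with j > i. Then every update sequence P is strongly equivalent to its canonical form P* (obtained by exhaustively deleting duplicate rules occurring in earlier components and deleting empty component programs): Bel(P + (Q_1,...,Q_k)) = Bel(P* + (Q_1,...,Q_k)) for all programs Q_1,...,Q_k and all k ≥ 0. -/
/-- One reduction step on an update sequence (a list of finite programs): either
    remove a rule from a component that also occurs in a later component, or remove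
    an empty component program. -/
inductive RedStep {Rule : Type} [DecidableEq Rule] :
    List (Finset Rule) → List (Finset Rule) → Prop
  | dup (Ps : List (Finset Rule)) (i j : ℕ) (r : Rule) (hij : i < j) (hj : j < Ps.length)
      (hri : r ∈ Ps.getD i ∅) (hrj : r ∈ Ps.getD j ∅) :
      RedStep Ps (Ps.set i ((Ps.getD i ∅).erase r))
  | empty (Ps : List (Finset Rule)) (i : ℕ) (hi : i < Ps.length) (he : Ps.getD i ∅ = ∅) :
      RedStep Ps (Ps.eraseIdx i)

/-- An update sequence is irreducible (canonical) if no reduction step applies. -/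
def IrreducibleSeq {Rule : Type} [DecidableEq Rule] (Ps : List (Finset Rule)) : Prop :=
  ∀ Qs, ¬ RedStep Ps Qs

/-- `Bel` is a contracting belief operator: (i) deleting an empty component program
    leaves the belief set unchanged, and (ii) deleting a rule from a component that
    also occurs in a later component leaves the belief set unchanged. -/
def Contracting {Rule : Type} [DecidableEq Rule]
    (Bel : List (Finset Rule) → Set Rule) : Prop :=
  (∀ P P' : List (Finset Rule), Bel (P ++ [∅] ++ P') = Bel (P ++ P')) ∧
  (∀ (Ps : List (Finset Rule)) (i j : ℕ) (r : Rule), i < j → j < Ps.length →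
      r ∈ Ps.getD i ∅ → r ∈ Ps.getD j ∅ →
      Bel (Ps.set i ((Ps.getD i ∅).erase r)) = Bel Ps)

/-- For a contracting belief operator `Bel`, every update sequence is
    strongly equivalent to its canonical form: if `Qs` is an irreducible sequence
    obtained from `Ps` by reduction steps, then appending any finite sequence of
    programs to `Ps` and to `Qs` yields the same belief set. -/
theorem contracting_canonical_strong_equiv {Rule : Type} [DecidableEq Rule]
    (Bel : List (Finset Rule) → Set Rule) (hc : Contracting Bel)
    (Ps Qs : List (Finset Rule))
    (hred : Relation.ReflTransGen RedStep Ps Qs) (hirr : IrreducibleSeq Qs) :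
    ∀ Rs : List (Finset Rule), Bel (Ps ++ Rs) = Bel (Qs ++ Rs) := by
  have key : ∀ A B : List (Finset Rule), RedStep A B → ∀ Rs, Bel (A ++ Rs) = Bel (B ++ Rs) := by
    intro A B hstep Rs
    cases hstep with
    | dup i j r hij hj hri hrj =>
      have hi : i < A.length := lt_trans hij hj
      have h1 : (A.set i ((A.getD i ∅).erase r)) ++ Rs
          = (A ++ Rs).set i (((A ++ Rs).getD i ∅).erase r) := by
        rw [List.getD_append _ _ _ _ hi, List.set_append_left _ _ hi]
      rw [h1]
      exact Eq.symm <| hc.2 (A ++ Rs) i j r hij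
        (lt_of_lt_of_le hj (by simp [List.length_append]))
        (by rwa [List.getD_append _ _ _ _ hi])
        (by rwa [List.getD_append _ _ _ _ hj])
    | empty i hi he =>
      have hA : A = A.take i ++ [∅] ++ A.drop (i + 1) := by
        have hget : A[i] = (∅ : Finset Rule) := by
          rw [← he]; simp [List.getD_eq_getElem?_getD, List.getElem?_eq_getElem hi]
        conv_lhs => rw [← List.take_append_drop i A]
        rw [List.drop_eq_getElem_cons hi, hget]
        simp
      have he2 : A.eraseIdx i = A.take i ++ A.drop (i + 1) :=
        List.eraseIdx_eq_take_drop_succ A i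
      calc Bel (A ++ Rs) = Bel (A.take i ++ [∅] ++ (A.drop (i+1) ++ Rs)) := by
            rw [← List.append_assoc]; rw [← hA]
        _ = Bel (A.take i ++ (A.drop (i+1) ++ Rs)) := hc.1 _ _
        _ = Bel (A.eraseIdx i ++ Rs) := by rw [he2, List.append_assoc]
  clear hirr
  intro Rs
  induction hred with
  | refl => rfl
  | tail _ hstep ih => exact ih.trans (key _ _ hstep Rs)
end
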